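/- Let P be a simplicial reflexive polytope of dimension n and u ∈ V(P*). Then the number of vertices v of P with ⟨v,u⟩ = 0 is at most n (and the number of vertices v with ⟨v,u⟩ = −1 is exactly n). -/

import Mathlib

open Set Pointwise

namespace Fano

/-- The ambient rational vector space `N_ℚ = ℚⁿ` (identified with its dual `M_ℚ`). -/
abbrev E (n : ℕ) : Type := Fin n → ℚ

/-- The standard pairing `⟨x, y⟩ = ∑ i, x i * y i` between `N_ℚ` and `M_ℚ`. -/
def pairing {n : ℕ} (x y : E n) : ℚ := ∑ i, x i * y i

/-- A point of `ℚⁿ` is a lattice point if all its coordinates are integers. -/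
def IsLatticePt {n : ℕ} (x : E n) : Prop := ∀ i, ∃ z : ℤ, x i = (z : ℚ)

/-- A lattice polytope: the convex hull of finitely many lattice points. -/
def IsLatticePolytope {n : ℕ} (P : Set (E n)) : Prop :=
  ∃ S : Finset (E n), (∀ x ∈ S, IsLatticePt x) ∧ P = convexHull ℚ (S : Set (E n))

/-- The dual polytope `P* = {y | ⟨x, y⟩ ≥ -1 for all x ∈ P}`. -/
def dualPolytope {n : ℕ} (P : Set (E n)) : Set (E n) :=
  {y | ∀ x ∈ P, -1 ≤ pairing x y}

/-- The set of vertices (= extreme points) of a polytope. -/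
def vertices {n : ℕ} (P : Set (E n)) : Set (E n) := Set.extremePoints ℚ P

/-- `F` is a (nonempty, proper) face of `P`: it is cut out by a supporting hyperplane. -/
def IsFace {n : ℕ} (P F : Set (E n)) : Prop :=
  ∃ (u : E n) (c : ℚ), (∀ x ∈ P, c ≤ pairing x u) ∧
    F = {x ∈ P | pairing x u = c} ∧ F.Nonempty ∧ F ≠ P

/-- A facet of an `n`-dimensional polytope: a face of dimension `n - 1`. -/
def IsFacet {n : ℕ} (P F : Set (E n)) : Prop :=
  IsFace P F ∧ Module.finrank ℚ (affineSpan ℚ F).direction = n - 1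

/-- A reflexive polytope: a lattice polytope containing the origin in its interior
(hence of full dimension `n`) whose dual polytope is again a lattice polytope. -/
def IsReflexivePolytope {n : ℕ} (P : Set (E n)) : Prop :=
  IsLatticePolytope P ∧ (0 : E n) ∈ interior P ∧ IsLatticePolytope (dualPolytope P)

/-- A polytope is simplicial if every facet has exactly `n` vertices
and these are linearly independent. -/
def IsSimplicial {n : ℕ} (P : Set (E n)) : Prop :=
  ∀ F : Set (E n), IsFacet P F →
    ∃ e : Fin n → E n, vertices F = Set.range e ∧ LinearIndependent ℚ e

/-- For `u ∈ V(P*)`, the corresponding facet `F_u = {x ∈ P | ⟨x, u⟩ = -1}` of `P`. -/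
def facetOf {n : ℕ} (P : Set (E n)) (u : E n) : Set (E n) :=
  {x ∈ P | pairing x u = -1}

/-- `δ` is the quantity `δ_P = min{⟨v,u⟩ | v ∈ V(P), u ∈ V(P*), v ∉ F_u}`. -/
def IsDeltaOf {n : ℕ} (P : Set (E n)) (δ : ℚ) : Prop :=
  (∃ v ∈ vertices P, ∃ u ∈ vertices (dualPolytope P), v ∉ facetOf P u ∧ pairing v u = δ) ∧
  (∀ v ∈ vertices P, ∀ u ∈ vertices (dualPolytope P), v ∉ facetOf P u → δ ≤ pairing v u)

/-- A vertex `v` is adjacent to a facet `F = Conv(e₁, …, eₙ)` of a simplicial polytope if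
replacing some vertex of `F` by `v` again yields a facet of `P`. -/
def AdjacentTo {n : ℕ} (P : Set (E n)) (v : E n) (F : Set (E n)) : Prop :=
  ∃ w ∈ vertices F, IsFacet P (convexHull ℚ (insert v (vertices F \ {w})))

/-- pairing as a linear map in the first argument. -/
def pl {n : ℕ} (y : E n) : E n →ₗ[ℚ] ℚ where
  toFun x := pairing x y
  map_add' a b := by simp [pairing, add_mul, Finset.sum_add_distrib]
  map_smul' c a := by simp [pairing, Finset.mul_sum, mul_assoc]

lemma pl_apply {n : ℕ} (y x : E n) : pl y x = pairing x y := rfl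

lemma pairing_zero_left {n : ℕ} (y : E n) : pairing 0 y = 0 := by simp [pairing]

lemma pairing_add_right {n : ℕ} (x u w : E n) :
    pairing x (u + w) = pairing x u + pairing x w := by
  simp [pairing, mul_add, Finset.sum_add_distrib]

lemma pairing_smul_right {n : ℕ} (x u : E n) (t : ℚ) :
    pairing x (t • u) = t * pairing x u := by
  simp [pairing, Finset.mul_sum]; exact Finset.sum_congr rfl fun i _ => by ring

lemma pairing_self_nonneg {n : ℕ} (x : E n) : 0 ≤ pairing x x :=
  Finset.sum_nonneg fun i _ => mul_self_nonneg _

lemma eq_zero_of_pairing_self {n : ℕ} {x : E n} (h : pairing x x = 0) : x = 0 := by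
  have h2 := (Finset.sum_eq_zero_iff_of_nonneg (fun i _ => mul_self_nonneg (x i))).1 h
  funext i
  have := h2 i (Finset.mem_univ i)
  exact mul_self_eq_zero.1 this

lemma pairing_sum_left {n : ℕ} {ι : Type*} (s : Finset ι) (c : ι → ℚ) (f : ι → E n) (y : E n) :
    pairing (∑ j ∈ s, c j • f j) y = ∑ j ∈ s, c j * pairing (f j) y := by
  rw [← pl_apply, map_sum]
  exact Finset.sum_congr rfl fun j _ => by rw [map_smul, smul_eq_mul, pl_apply]

/-- membership in the dual can be tested on generators. -/
lemma mem_dual_of_forall {n : ℕ} {P : Set (E n)} {S : Finset (E n)}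
    (hP : P = convexHull ℚ (S : Set (E n))) {y : E n}
    (h : ∀ s ∈ S, -1 ≤ pairing s y) : y ∈ dualPolytope P := by
  intro x hx
  have hsub : P ⊆ {x | -1 ≤ pl y x} := by
    rw [hP]
    exact convexHull_min (fun s hs => h s hs) (convex_halfSpace_ge (pl y).isLinear (-1))
  exact hsub hx

lemma not_extremePoint_of_pm {n : ℕ} {A : Set (E n)} {y w : E n} (hw : w ≠ 0)
    (h1 : y + w ∈ A) (h2 : y - w ∈ A) : y ∉ A.extremePoints ℚ := by
  intro hy
  have hseg : y ∈ openSegment ℚ (y + w) (y - w) := by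
    refine ⟨1/2, 1/2, by norm_num, by norm_num, by norm_num, ?_⟩
    module
  have := hy.2 h1 h2 hseg
  apply hw
  have h3 := this
  have : y + w - y = 0 := by rw [h3]; abel
  simpa using this

lemma step_not_extreme {n : ℕ} (S : Finset (E n)) {x : E n} (hxS : x ∈ S)
    (hx : x ∉ (convexHull ℚ (S : Set (E n))).extremePoints ℚ) :
    x ∈ convexHull ℚ (↑(S.erase x) : Set (E n)) := by
  classical
  have hxP : x ∈ convexHull ℚ (S : Set (E n)) := subset_convexHull ℚ _ hxS
  rw [mem_extremePoints] at hx
  push_neg at hx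
  obtain ⟨x₁, hx₁, x₂, hx₂, hseg, hne⟩ := hx hxP
  obtain ⟨w₁, hw₁0, hw₁1, hc₁⟩ := Finset.mem_convexHull.1 hx₁
  obtain ⟨w₂, hw₂0, hw₂1, hc₂⟩ := Finset.mem_convexHull.1 hx₂
  obtain ⟨a, b, ha, hb, hab, hx'⟩ := hseg
  have hc₁' : ∑ s ∈ S, w₁ s • s = x₁ := by
    rw [← hc₁, Finset.centerMass_eq_of_sum_1 _ _ hw₁1]; rfl
  have hc₂' : ∑ s ∈ S, w₂ s • s = x₂ := by
    rw [← hc₂, Finset.centerMass_eq_of_sum_1 _ _ hw₂1]; rfl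
  set μ : E n → ℚ := fun s => a * w₁ s + b * w₂ s with hμ
  have hμ0 : ∀ s ∈ S, 0 ≤ μ s := fun s hs =>
    add_nonneg (mul_nonneg ha.le (hw₁0 s hs)) (mul_nonneg hb.le (hw₂0 s hs))
  have hμ1 : ∑ s ∈ S, μ s = 1 := by
    simp only [hμ, Finset.sum_add_distrib, ← Finset.mul_sum, hw₁1, hw₂1]
    linarith
  have hμx : ∑ s ∈ S, μ s • s = x := by
    rw [← hx']
    simp only [hμ, add_smul, Finset.sum_add_distrib, mul_smul, ← Finset.smul_sum, hc₁', hc₂']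
  have hrest : ∑ s ∈ S.erase x, μ s = 1 - μ x := by
    have := Finset.add_sum_erase S μ hxS
    linarith
  by_cases hμx1 : μ x = 1
  · exfalso
    have hzero : ∀ s ∈ S.erase x, μ s = 0 := by
      have h0 : ∑ s ∈ S.erase x, μ s = 0 := by rw [hrest, hμx1]; ring
      exact (Finset.sum_eq_zero_iff_of_nonneg
        (fun s hs => hμ0 s (Finset.mem_of_mem_erase hs))).1 h0
    have hw₁z : ∀ s ∈ S.erase x, w₁ s = 0 := by
      intro s hs
      have h1 := hzero s hs
      have h2 := hw₁0 s (Finset.mem_of_mem_erase hs)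
      have h3 := hw₂0 s (Finset.mem_of_mem_erase hs)
      have h1' : a * w₁ s + b * w₂ s = 0 := h1
      nlinarith
    have hw₂z : ∀ s ∈ S.erase x, w₂ s = 0 := by
      intro s hs
      have h1 := hzero s hs
      have h2 := hw₁0 s (Finset.mem_of_mem_erase hs)
      have h3 := hw₂0 s (Finset.mem_of_mem_erase hs)
      have h1' : a * w₁ s + b * w₂ s = 0 := h1
      nlinarith
    have hw₁x : w₁ x = 1 := by
      have := Finset.add_sum_erase S w₁ hxS
      rw [Finset.sum_eq_zero hw₁z] at this
      linarith
    have hw₂x : w₂ x = 1 := by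
      have := Finset.add_sum_erase S w₂ hxS
      rw [Finset.sum_eq_zero hw₂z] at this
      linarith
    have hx₁x : x₁ = x := by
      rw [← hc₁']
      rw [← Finset.add_sum_erase S (fun s => w₁ s • s) hxS, hw₁x,
        Finset.sum_eq_zero (fun s hs => by rw [hw₁z s hs, zero_smul]), one_smul, add_zero]
    have hx₂x : x₂ = x := by
      rw [← hc₂']
      rw [← Finset.add_sum_erase S (fun s => w₂ s • s) hxS, hw₂x,
        Finset.sum_eq_zero (fun s hs => by rw [hw₂z s hs, zero_smul]), one_smul, add_zero]
    exact hne hx₁x hx₂x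
  · have hμxle : μ x ≤ 1 := by
      have h0 : 0 ≤ ∑ s ∈ S.erase x, μ s :=
        Finset.sum_nonneg fun s hs => hμ0 s (Finset.mem_of_mem_erase hs)
      linarith
    have hlt : μ x < 1 := lt_of_le_of_ne hμxle hμx1
    have hpos : 0 < 1 - μ x := by linarith
    set ν : E n → ℚ := fun s => μ s / (1 - μ x) with hν
    refine Finset.mem_convexHull.2 ⟨ν, ?_, ?_, ?_⟩
    · intro s hs
      exact div_nonneg (hμ0 s (Finset.mem_of_mem_erase hs)) hpos.le
    · simp only [hν]
      rw [← Finset.sum_div, hrest, div_self hpos.ne']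
    · rw [Finset.centerMass_eq_of_sum_1]
      · have haddsum := Finset.add_sum_erase S (fun s => μ s • s) hxS
        have hsum : ∑ s ∈ S.erase x, μ s • s = (1 - μ x) • x := by
          have h2 : ∑ s ∈ S.erase x, μ s • s = x - μ x • x := by
            have h3 : μ x • x + ∑ s ∈ S.erase x, μ s • s = x := by
              rw [← hμx] at haddsum ⊢; exact haddsum
            linear_combination (norm := module) h3
          rw [h2, sub_smul, one_smul]
        have heq : ∑ s ∈ S.erase x, ν s • (id s) = (1 - μ x)⁻¹ • ((1-μ x) • x) := by
          rw [← hsum, Finset.smul_sum]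
          refine Finset.sum_congr rfl fun s _ => ?_
          simp only [hν, smul_smul, div_eq_inv_mul]
          rfl
        rw [heq, smul_smul, inv_mul_cancel₀ hpos.ne', one_smul]
      · simp only [hν]
        rw [← Finset.sum_div, hrest, div_self hpos.ne' ]

lemma mink_aux {n : ℕ} : ∀ (k : ℕ) (S : Finset (E n)), S.card ≤ k →
    convexHull ℚ (S : Set (E n)) ⊆
      convexHull ℚ ((convexHull ℚ (S : Set (E n))).extremePoints ℚ) := by
  classical
  intro k
  induction k with
  | zero =>
    intro S hS
    rw [Finset.card_eq_zero.1 (Nat.le_zero.1 hS)]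
    simp
  | succ k ih =>
    intro S hS
    by_cases hsub : (S : Set (E n)) ⊆ (convexHull ℚ (S : Set (E n))).extremePoints ℚ
    · exact convexHull_min (hsub.trans (subset_convexHull ℚ _)) (convex_convexHull ℚ _)
    · obtain ⟨x, hxS, hx⟩ : ∃ x ∈ S, x ∉ (convexHull ℚ (S : Set (E n))).extremePoints ℚ := by
        by_contra h
        push_neg at h
        exact hsub fun y hy => h y hy
      have hstep := step_not_extreme S hxS hx
      have hconv : convexHull ℚ (S : Set (E n)) = convexHull ℚ (↑(S.erase x) : Set (E n)) := by
        apply le_antisymm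
        · apply convexHull_min _ (convex_convexHull ℚ _)
          intro s hs
          by_cases hsx : s = x
          · rw [hsx]; exact hstep
          · exact subset_convexHull ℚ _ (Finset.mem_erase.2 ⟨hsx, hs⟩)
        · exact convexHull_mono (by exact_mod_cast Finset.erase_subset x S)
      rw [hconv]
      refine (ih (S.erase x) ?_).trans (convexHull_mono (by rw [← hconv]))
      have := Finset.card_erase_of_mem hxS
      omega

lemma convexHull_subset_hull_extremePoints {n : ℕ} (S : Finset (E n)) :
    convexHull ℚ (S : Set (E n)) ⊆
      convexHull ℚ ((convexHull ℚ (S : Set (E n))).extremePoints ℚ) :=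
  mink_aux S.card S le_rfl

lemma face_eq_convexHull_filter {n : ℕ} (S : Finset (E n)) (u : E n)
    (hS : ∀ s ∈ S, -1 ≤ pairing s u) :
    facetOf (convexHull ℚ (S : Set (E n))) u
      = convexHull ℚ (↑(S.filter (fun s => pairing s u = -1)) : Set (E n)) := by
  classical
  apply le_antisymm
  · rintro x ⟨hxP, hxu⟩
    obtain ⟨w, hw0, hw1, hc⟩ := Finset.mem_convexHull.1 hxP
    have hc' : ∑ s ∈ S, w s • s = x := by
      rw [← hc, Finset.centerMass_eq_of_sum_1 _ _ hw1]; rfl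
    have hps : pairing x u = ∑ s ∈ S, w s * pairing s u := by
      rw [← hc']; exact pairing_sum_left S w id u
    have hzero : ∑ s ∈ S, w s * (pairing s u + 1) = 0 := by
      simp only [mul_add, Finset.sum_add_distrib, mul_one, hw1]
      rw [← hps]
      linarith
    have hallz : ∀ s ∈ S, w s * (pairing s u + 1) = 0 :=
      (Finset.sum_eq_zero_iff_of_nonneg
        (fun s hs => mul_nonneg (hw0 s hs) (by linarith [hS s hs]))).1 hzero
    have hwz : ∀ s ∈ S, ¬(pairing s u = -1) → w s = 0 := by
      intro s hs hsn
      have := hallz s hs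
      rcases mul_eq_zero.1 this with h | h
      · exact h
      · exact absurd (by linarith) hsn
    set Sf := S.filter (fun s => pairing s u = -1) with hSf
    refine Finset.mem_convexHull.2 ⟨w, ?_, ?_, ?_⟩
    · exact fun s hs => hw0 s (Finset.mem_of_mem_filter s hs)
    · rw [← hw1, hSf]
      rw [Finset.sum_filter_add_sum_filter_not S (fun s => pairing s u = -1) w |>.symm]
      have : ∑ s ∈ S.filter (fun s => ¬ pairing s u = -1), w s = 0 :=
        Finset.sum_eq_zero fun s hs =>
          hwz s (Finset.mem_of_mem_filter s hs) (Finset.mem_filter.1 hs).2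
      rw [this, add_zero]
    · have hsum1 : ∑ s ∈ Sf, w s = 1 := by
        rw [← hw1, hSf]
        rw [Finset.sum_filter_add_sum_filter_not S (fun s => pairing s u = -1) w |>.symm]
        have : ∑ s ∈ S.filter (fun s => ¬ pairing s u = -1), w s = 0 :=
          Finset.sum_eq_zero fun s hs =>
            hwz s (Finset.mem_of_mem_filter s hs) (Finset.mem_filter.1 hs).2
        rw [this, add_zero]
      rw [Finset.centerMass_eq_of_sum_1 _ _ hsum1]
      rw [← hc', hSf]
      rw [Finset.sum_filter_add_sum_filter_not S (fun s => pairing s u = -1)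
        (fun s => w s • s) |>.symm]
      have : ∑ s ∈ S.filter (fun s => ¬ pairing s u = -1), w s • s = 0 :=
        Finset.sum_eq_zero fun s hs => by
          rw [hwz s (Finset.mem_of_mem_filter s hs) (Finset.mem_filter.1 hs).2, zero_smul]
      rw [this, add_zero]
      rfl
  · have hconv : Convex ℚ (facetOf (convexHull ℚ (S : Set (E n))) u) := by
      have : facetOf (convexHull ℚ (S : Set (E n))) u
          = convexHull ℚ (S : Set (E n)) ∩ {x | pl u x = -1} := rfl
      rw [this]
      exact (convex_convexHull ℚ _).inter (convex_hyperplane (pl u).isLinear (-1))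
    apply convexHull_min _ hconv
    intro s hs
    rw [Finset.mem_coe, Finset.mem_filter] at hs
    exact ⟨subset_convexHull ℚ _ hs.1, hs.2⟩

noncomputable def toVec {n : ℕ} (φ : E n →ₗ[ℚ] ℚ) : E n := fun k => φ (Pi.single k 1)

lemma pairing_toVec {n : ℕ} (φ : E n →ₗ[ℚ] ℚ) (x : E n) : pairing x (toVec φ) = φ x := by
  have hx : x = ∑ k, Pi.single k (x k) := by rw [Finset.univ_sum_single]
  conv_rhs => rw [hx]
  rw [map_sum, pairing]
  refine Finset.sum_congr rfl fun k _ => ?_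
  have : (Pi.single k (x k) : E n) = (x k) • (Pi.single k 1 : E n) := by
    ext j
    by_cases h : j = k <;> simp [Pi.single_apply, h]
  rw [this, map_smul]
  rfl

lemma finrank_En {n : ℕ} : Module.finrank ℚ (E n) = n := Module.finrank_fin_fun ℚ

lemma pl_surjective {n : ℕ} {y : E n} (hy : y ≠ 0) : Function.Surjective (pl y) := by
  intro q
  have hp : pairing y y ≠ 0 := fun h => hy (eq_zero_of_pairing_self h)
  refine ⟨(q / pairing y y) • y, ?_⟩
  rw [map_smul, pl_apply, smul_eq_mul, div_mul_eq_mul_div, mul_div_assoc, div_self hp, mul_one]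

lemma finrank_ker_pl {n : ℕ} {y : E n} (hy : y ≠ 0) :
    Module.finrank ℚ (LinearMap.ker (pl y)) = n - 1 := by
  have h1 := LinearMap.finrank_range_add_finrank_ker (pl y)
  rw [LinearMap.range_eq_top.2 (pl_surjective hy), finrank_top, Module.finrank_self,
    finrank_En] at h1
  omega

lemma finrank_le_of_subset_hyperplane {n : ℕ} {F : Set (E n)} {y : E n} {c : ℚ} (hy : y ≠ 0)
    (hF : ∀ x ∈ F, pairing x y = c) :
    Module.finrank ℚ (affineSpan ℚ F).direction ≤ n - 1 := by
  rw [direction_affineSpan]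
  refine le_trans (Submodule.finrank_mono ?_) (le_of_eq (finrank_ker_pl hy))
  rw [vectorSpan_def]
  apply Submodule.span_le.2
  rintro d hd
  obtain ⟨x, hx, z, hz, rfl⟩ := hd
  have : pl y (x - z) = 0 := by
    have : pl y (x - z) = pairing x y - pairing z y := by rw [map_sub]; rfl
    rw [this, hF x hx, hF z hz, sub_self]
  simpa [LinearMap.mem_ker] using this

lemma pairing_zero_right {n : ℕ} (x : E n) : pairing x 0 = 0 := by simp [pairing]

lemma pairing_sub_right {n : ℕ} (x u w : E n) :
    pairing x (u - w) = pairing x u - pairing x w := by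
  simp [pairing, mul_sub, Finset.sum_sub_distrib]

lemma tight_pair {p1 p2 a b : ℚ} (h1 : -1 ≤ p1) (h2 : -1 ≤ p2) (ha : 0 < a) (hb : 0 < b)
    (hab : a + b = 1) (h : a * p1 + b * p2 = -1) : p1 = -1 ∧ p2 = -1 := by
  constructor <;> nlinarith

lemma vertices_facet_subset {n : ℕ} {P : Set (E n)} {u' : E n} (hu' : u' ∈ dualPolytope P) :
    vertices (facetOf P u') ⊆ vertices P := by
  rintro x ⟨⟨hxP, hxu⟩, hext⟩
  refine ⟨hxP, ?_⟩
  intro x1 h1 x2 h2 hseg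
  obtain ⟨a, b, ha, hb, hab, hsum⟩ := hseg
  have e1 : a * pairing x1 u' + b * pairing x2 u' = -1 := by
    have h3 : pl u' (a • x1 + b • x2) = pl u' x := by rw [hsum]
    rw [map_add, map_smul, map_smul] at h3
    simpa [pl_apply, hxu, smul_eq_mul] using h3
  obtain ⟨t1, t2⟩ := tight_pair (hu' x1 h1) (hu' x2 h2) ha hb hab e1
  exact hext ⟨h1, t1⟩ ⟨h2, t2⟩ ⟨a, b, ha, hb, hab, hsum⟩

lemma mem_vertices_of_mem {n : ℕ} {P G : Set (E n)} (hGP : G ⊆ P) {x : E n}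
    (hx : x ∈ vertices P) (hxG : x ∈ G) : x ∈ vertices G :=
  inter_extremePoints_subset_extremePoints_of_subset hGP ⟨hxG, hx⟩

lemma dual_vertex_of_tight {n : ℕ} {P : Set (E n)} {y : E n} (hy : y ∈ dualPolytope P)
    (g : Fin n → E n) (hgP : ∀ k, g k ∈ P) (hgt : ∀ k, pairing (g k) y = -1)
    (hspan : Submodule.span ℚ (Set.range g) = ⊤) : y ∈ vertices (dualPolytope P) := by
  refine ⟨hy, ?_⟩
  intro y1 h1 y2 h2 hseg
  obtain ⟨a, b, ha, hb, hab, hsum⟩ := hseg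
  have tight : ∀ k, pairing (g k) y1 = -1 ∧ pairing (g k) y2 = -1 := by
    intro k
    have e1 : a * pairing (g k) y1 + b * pairing (g k) y2 = -1 := by
      have : pairing (g k) (a • y1 + b • y2) = -1 := by rw [hsum]; exact hgt k
      rw [pairing_add_right, pairing_smul_right, pairing_smul_right] at this
      exact this
    exact tight_pair (h1 (g k) (hgP k)) (h2 (g k) (hgP k)) ha hb hab e1
  have hker : ∀ k, pl (y1 - y2) (g k) = 0 := by
    intro k
    rw [pl_apply, pairing_sub_right, (tight k).1, (tight k).2, sub_self]
  have hle : Submodule.span ℚ (Set.range g) ≤ LinearMap.ker (pl (y1 - y2)) := by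
    apply Submodule.span_le.2
    rintro z ⟨k, rfl⟩
    simpa [LinearMap.mem_ker] using hker k
  rw [hspan, top_le_iff] at hle
  have hd : y1 - y2 = 0 := by
    apply eq_zero_of_pairing_self
    have : pl (y1 - y2) (y1 - y2) = 0 := by
      have : (y1 - y2) ∈ LinearMap.ker (pl (y1 - y2)) := hle ▸ Submodule.mem_top
      simpa [LinearMap.mem_ker] using this
    simpa [pl_apply] using this
  have hy12 : y1 = y2 := by rwa [sub_eq_zero] at hd
  have hy1 : y1 = y := by
    rw [← hsum, hy12, ← add_smul, hab, one_smul]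
  exact hy1

lemma facet_perturb {n : ℕ} {P : Set (E n)} {S : Finset (E n)} (hne : S.Nonempty)
    (hP : P = convexHull ℚ (S : Set (E n))) {u : E n}
    (hu : u ∈ vertices (dualPolytope P)) {w : E n} (hw : w ≠ 0)
    (hw0 : ∀ s ∈ S, pairing s u = -1 → pairing s w = 0) : False := by
  classical
  have huP : u ∈ dualPolytope P := hu.1
  have hSP : ∀ s ∈ S, -1 ≤ pairing s u := fun s hs =>
    huP s (hP ▸ subset_convexHull ℚ (S : Set (E n)) hs)
  set f : E n → ℚ := fun s =>
    (pairing s u + 1) / (|pairing s w| + 1) + (if pairing s u = -1 then 1 else 0) with hf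
  set ε := S.inf' hne f with hεdef
  have hfpos : ∀ s ∈ S, 0 < f s := by
    intro s hs
    by_cases h : pairing s u = -1
    · have h0 : pairing s u + 1 = 0 := by linarith
      simp only [hf, h, if_pos, h0, zero_div]
      norm_num
    · have h1 : 0 < pairing s u + 1 := by
        rcases lt_or_eq_of_le (hSP s hs) with h' | h'
        · linarith
        · exact absurd h'.symm h
      have h2 : 0 < |pairing s w| + 1 := by positivity
      simp only [hf, h, if_neg, if_false]
      have : 0 < (pairing s u + 1) / (|pairing s w| + 1) := div_pos h1 h2
      simpa using this
  have hε : 0 < ε := (Finset.lt_inf'_iff hne).2 hfpos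
  have key : ∀ t : ℚ, |t| ≤ ε → u + t • w ∈ dualPolytope P := by
    intro t ht
    apply mem_dual_of_forall hP
    intro s hs
    rw [pairing_add_right, pairing_smul_right]
    by_cases h : pairing s u = -1
    · rw [hw0 s hs h, mul_zero, add_zero, h]
    · have h1 : 0 < pairing s u + 1 := by
        rcases lt_or_eq_of_le (hSP s hs) with h' | h'
        · linarith
        · exact absurd h'.symm h
      have hεs : ε ≤ f s := Finset.inf'_le f hs
      have hfs : f s = (pairing s u + 1) / (|pairing s w| + 1) := by
        simp only [hf, h, if_neg, if_false, add_zero]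
      have hA : 0 ≤ |pairing s w| := abs_nonneg _
      have hmul : ε * (|pairing s w| + 1) ≤ pairing s u + 1 := by
        have h2 : (0:ℚ) < |pairing s w| + 1 := by positivity
        rw [hfs] at hεs
        calc ε * (|pairing s w| + 1)
            ≤ ((pairing s u + 1) / (|pairing s w| + 1)) * (|pairing s w| + 1) :=
              mul_le_mul_of_nonneg_right hεs h2.le
          _ = pairing s u + 1 := div_mul_cancel₀ _ h2.ne'
      have hb : ε * |pairing s w| < pairing s u + 1 := by nlinarith
      have habs : |t * pairing s w| ≤ ε * |pairing s w| := by
        rw [abs_mul]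
        exact mul_le_mul_of_nonneg_right ht hA
      have := neg_abs_le (t * pairing s w)
      linarith
  have h1 := key ε (le_of_eq (abs_of_pos hε))
  have h2' := key (-ε) (le_of_eq (by rw [abs_neg, abs_of_pos hε]))
  have h2 : u - ε • w ∈ dualPolytope P := by
    rw [sub_eq_add_neg, ← neg_smul]
    exact h2'
  exact not_extremePoint_of_pm (smul_ne_zero hε.ne' hw) h1 h2 hu

lemma isFacet_facetOf {n : ℕ} (hn : 1 ≤ n) {P : Set (E n)} {S : Finset (E n)}
    (hP : P = convexHull ℚ (S : Set (E n))) (h0 : (0 : E n) ∈ interior P)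
    {u : E n} (hu : u ∈ vertices (dualPolytope P)) :
    IsFacet P (facetOf P u) := by
  classical
  have h0P : (0 : E n) ∈ P := interior_subset h0
  have hSne : S.Nonempty := by
    rcases Finset.eq_empty_or_nonempty S with h | h
    · exfalso
      rw [hP, h] at h0P
      simpa using h0P
    · exact h
  have huP : u ∈ dualPolytope P := hu.1
  have hSP : ∀ s ∈ S, -1 ≤ pairing s u := fun s hs =>
    huP s (hP ▸ subset_convexHull ℚ (S : Set (E n)) hs)
  -- nonemptiness of the facet
  have hex : ∃ s ∈ S, pairing s u = -1 := by
    by_contra hno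
    push_neg at hno
    by_cases hu0 : u = 0
    · have hwne : (Pi.single (⟨0, hn⟩ : Fin n) (1:ℚ) : E n) ≠ 0 := by
        intro h
        have := congrFun h (⟨0, hn⟩ : Fin n)
        simpa using this
      exact facet_perturb hSne hP hu hwne (fun s hs ht => absurd ht (hno s hs))
    · exact facet_perturb hSne hP hu hu0 (fun s hs ht => absurd ht (hno s hs))
  obtain ⟨s₀, hs₀S, hs₀⟩ := hex
  have hs₀P : s₀ ∈ P := hP ▸ subset_convexHull ℚ (S : Set (E n)) hs₀S
  have hFne : (facetOf P u).Nonempty := ⟨s₀, hs₀P, hs₀⟩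
  have hu0 : u ≠ 0 := by
    intro h
    rw [h, pairing_zero_right] at hs₀
    norm_num at hs₀
  have hFneP : facetOf P u ≠ P := by
    intro h
    have h0F : (0 : E n) ∈ facetOf P u := by rw [h]; exact h0P
    have := h0F.2
    rw [pairing_zero_left] at this
    norm_num at this
  have hface : IsFace P (facetOf P u) := ⟨u, -1, fun x hx => huP x hx, rfl, hFne, hFneP⟩
  refine ⟨hface, ?_⟩
  have hle : Module.finrank ℚ (affineSpan ℚ (facetOf P u)).direction ≤ n - 1 :=
    finrank_le_of_subset_hyperplane hu0 (fun x hx => hx.2)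
  have hge : ¬ Module.finrank ℚ (affineSpan ℚ (facetOf P u)).direction < n - 1 := by
    intro hlt
    set F := facetOf P u with hF
    set W := Submodule.span ℚ F with hW
    have hWle : W ≤ (vectorSpan ℚ F) ⊔ (Submodule.span ℚ ({s₀} : Set (E n))) := by
      apply Submodule.span_le.2
      intro x hx
      have hdiff : x - s₀ ∈ vectorSpan ℚ F := vsub_mem_vectorSpan ℚ hx ⟨hs₀P, hs₀⟩
      have h1 : x - s₀ ∈ (vectorSpan ℚ F) ⊔ (Submodule.span ℚ ({s₀} : Set (E n))) :=
        Submodule.mem_sup_left hdiff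
      have h2 : s₀ ∈ (vectorSpan ℚ F) ⊔ (Submodule.span ℚ ({s₀} : Set (E n))) :=
        Submodule.mem_sup_right (Submodule.subset_span rfl)
      have := Submodule.add_mem _ h1 h2
      simpa using this
    have hrank1 : Module.finrank ℚ (Submodule.span ℚ ({s₀} : Set (E n))) ≤ 1 := by
      by_cases h : s₀ = 0
      · rw [h, Submodule.span_zero_singleton, finrank_bot]
        omega
      · rw [finrank_span_singleton h]
    have hvs : Module.finrank ℚ (vectorSpan ℚ F) < n - 1 := by
      rw [direction_affineSpan] at hlt
      exact hlt
    have hWrank : Module.finrank ℚ W < n := by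
      have h2 : Module.finrank ℚ W ≤ Module.finrank ℚ (vectorSpan ℚ F)
          + Module.finrank ℚ (Submodule.span ℚ ({s₀} : Set (E n))) :=
        le_trans (Submodule.finrank_mono hWle)
          (Submodule.finrank_add_le_finrank_add_finrank (vectorSpan ℚ F)
            (Submodule.span ℚ ({s₀} : Set (E n))))
      omega
    have hWtop : W < ⊤ := by
      rw [lt_top_iff_ne_top]
      intro h
      rw [h, finrank_top, finrank_En] at hWrank
      omega
    obtain ⟨φ, hφ, hφbot⟩ := Submodule.exists_dual_map_eq_bot_of_lt_top hWtop inferInstance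
    have hwz : toVec φ ≠ 0 := by
      intro h
      apply hφ
      apply LinearMap.ext
      intro x
      rw [← pairing_toVec φ x, h, pairing_zero_right]
      rfl
    have hw0 : ∀ s ∈ S, pairing s u = -1 → pairing s (toVec φ) = 0 := by
      intro s hs ht
      have hsF : s ∈ F := ⟨hP ▸ subset_convexHull ℚ (S : Set (E n)) hs, ht⟩
      have hmem : φ s ∈ W.map φ := Submodule.mem_map_of_mem (Submodule.subset_span hsF)
      rw [hφbot] at hmem
      rw [pairing_toVec]
      exact (Submodule.mem_bot ℚ).1 hmem
    exact facet_perturb hSne hP hu hwz hw0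
  omega

lemma pairing_eq_neg_sum_repr {n : ℕ} (B : Module.Basis (Fin n) ℚ (E n)) {u : E n}
    (hB : ∀ j, pairing (B j) u = -1) (x : E n) :
    pairing x u = -∑ j, B.repr x j := by
  conv_lhs => rw [← B.sum_repr x]
  rw [pairing_sum_left]
  rw [Finset.sum_congr rfl (fun j _ => by rw [hB j, mul_neg_one] :
    ∀ j ∈ Finset.univ, B.repr x j * pairing (B j) u = -(B.repr x j))]
  rw [Finset.sum_neg_distrib]

lemma pairing_coordVec {n : ℕ} (B : Module.Basis (Fin n) ℚ (E n)) (i : Fin n) (x : E n) :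
    pairing x (toVec (B.coord i)) = B.repr x i := by
  rw [pairing_toVec, Module.Basis.coord_apply]

lemma pairing_int {n : ℕ} {x y : E n} (hx : IsLatticePt x) (hy : IsLatticePt y) :
    ∃ m : ℤ, pairing x y = (m : ℚ) := by
  choose a ha using hx
  choose b hb using hy
  refine ⟨∑ i, a i * b i, ?_⟩
  rw [pairing]
  push_cast
  exact Finset.sum_congr rfl fun i _ => by rw [ha i, hb i]

lemma vertex_ne_zero {n : ℕ} (hn : 1 ≤ n) {P : Set (E n)} (h0 : (0 : E n) ∈ interior P)
    {v : E n} (hv : v ∈ vertices P) : v ≠ 0 := by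
  intro hveq
  set x₀ : E n := Pi.single (⟨0, hn⟩ : Fin n) (1:ℚ) with hx₀
  have hx₀ne : x₀ ≠ 0 := by
    intro h
    have := congrFun h (⟨0, hn⟩ : Fin n)
    simpa [hx₀] using this
  have hc : Continuous (fun t : ℚ => t • x₀) := continuous_id.smul continuous_const
  have hopen : IsOpen ((fun t : ℚ => t • x₀) ⁻¹' interior P) := isOpen_interior.preimage hc
  have h0mem : (0 : ℚ) ∈ (fun t : ℚ => t • x₀) ⁻¹' interior P := by
    simp only [Set.mem_preimage, zero_smul]
    exact h0
  obtain ⟨δ, hδ, hball⟩ := Metric.isOpen_iff.1 hopen 0 h0mem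
  obtain ⟨q, hq0, hqδ⟩ := exists_rat_btwn hδ
  have hq0' : (0 : ℚ) < q := by exact_mod_cast hq0
  have hqmem : ∀ t : ℚ, |t| = q → t • x₀ ∈ P := by
    intro t ht
    have : t ∈ Metric.ball (0:ℚ) δ := by
      rw [Metric.mem_ball, Rat.dist_eq]
      push_cast
      rw [sub_zero, ← Rat.cast_abs, ht]
      exact hqδ
    exact interior_subset (hball this)
  have h1 : (0:E n) + q • x₀ ∈ P := by
    rw [zero_add]
    exact hqmem q (abs_of_pos hq0')
  have h2 : (0:E n) - q • x₀ ∈ P := by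
    rw [zero_sub, ← neg_smul]
    exact hqmem (-q) (by rw [abs_neg, abs_of_pos hq0'])
  exact not_extremePoint_of_pm (smul_ne_zero hq0'.ne' hx₀ne) h1 h2 (hveq ▸ hv)

lemma replace_family_linIndep {n : ℕ} (B : Module.Basis (Fin n) ℚ (E n)) (i : Fin n) {s : E n}
    (hs : B.repr s i ≠ 0) :
    LinearIndependent ℚ (fun k => if k = i then s else B k) := by
  classical
  rw [Fintype.linearIndependent_iff]
  intro c hc
  set g : Fin n → E n := fun k => if k = i then s else B k with hg
  have h1 : (B.repr (∑ k, c k • g k)) i = 0 := by rw [hc]; simp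
  have h2 : ∀ k, (B.repr (g k)) i = if k = i then B.repr s i else 0 := by
    intro k
    by_cases hk : k = i
    · simp [hg, hk]
    · simp [hg, hk, Finsupp.single_apply, B.repr_self]
  have h3 : (B.repr (∑ k, c k • g k)) i = ∑ k, c k * (B.repr (g k)) i := by
    rw [map_sum]
    rw [Finsupp.finset_sum_apply]
    exact Finset.sum_congr rfl fun k _ => by rw [map_smul]; rfl
  have h4 : ∑ k, c k * (B.repr (g k)) i = c i * B.repr s i := by
    rw [Finset.sum_congr rfl (fun k _ => by rw [h2 k])]
    simp [Finset.sum_ite_eq]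
  have hci : c i = 0 := by
    have := h1
    rw [h3, h4] at this
    rcases mul_eq_zero.1 this with h | h
    · exact h
    · exact absurd h hs
  have hc' : ∑ k, c k • B k = 0 := by
    rw [← hc]
    refine Finset.sum_congr rfl fun k _ => ?_
    by_cases hk : k = i
    · rw [hk, hci, zero_smul, zero_smul]
    · simp [hg, hk]
  have := Fintype.linearIndependent_iff.1 B.linearIndependent c hc'
  intro k
  by_cases hk : k = i
  · rw [hk]; exact hci
  · exact this k

lemma repr_nonneg_on_facet {n : ℕ} {P : Set (E n)} {S : Finset (E n)}
    (hP : P = convexHull ℚ (S : Set (E n))) {u : E n} (huP : u ∈ dualPolytope P)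
    (B : Module.Basis (Fin n) ℚ (E n)) (hBV : vertices (facetOf P u) = Set.range (⇑B))
    (i : Fin n) : ∀ x ∈ facetOf P u, 0 ≤ B.repr x i := by
  classical
  have hSP : ∀ s ∈ S, -1 ≤ pairing s u := fun s hs =>
    huP s (hP ▸ subset_convexHull ℚ (S : Set (E n)) hs)
  have hFc : facetOf P u = convexHull ℚ
      (↑(S.filter (fun s => pairing s u = -1)) : Set (E n)) := by
    rw [hP]
    exact face_eq_convexHull_filter S u hSP
  intro x hx
  have hx2 : x ∈ convexHull ℚ ((convexHull ℚ
      (↑(S.filter (fun s => pairing s u = -1)) : Set (E n))).extremePoints ℚ) := by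
    apply convexHull_subset_hull_extremePoints
    rw [← hFc]
    exact hx
  rw [← hFc] at hx2
  have hx3 : x ∈ convexHull ℚ (Set.range (⇑B)) := by
    rw [← hBV]
    exact hx2
  have hsub : convexHull ℚ (Set.range (⇑B)) ⊆ {w : E n | 0 ≤ B.coord i w} := by
    apply convexHull_min _ (convex_halfSpace_ge (B.coord i).isLinear 0)
    rintro z ⟨j, rfl⟩
    simp only [Set.mem_setOf_eq, Module.Basis.coord_apply, B.repr_self]
    rw [Finsupp.single_apply]
    split <;> norm_num
  have := hsub hx3
  rw [Set.mem_setOf_eq, Module.Basis.coord_apply] at this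
  exact this

lemma key_unique {n : ℕ} (hn : 1 ≤ n) {P : Set (E n)} {S T : Finset (E n)}
    (hSlat : ∀ x ∈ S, IsLatticePt x) (hP : P = convexHull ℚ (S : Set (E n)))
    (hTlat : ∀ x ∈ T, IsLatticePt x) (hT : dualPolytope P = convexHull ℚ (T : Set (E n)))
    (h0 : (0 : E n) ∈ interior P) (hsimp : IsSimplicial P)
    {u : E n} (hu : u ∈ vertices (dualPolytope P))
    (B : Module.Basis (Fin n) ℚ (E n)) (hBV : vertices (facetOf P u) = Set.range (⇑B))
    (i : Fin n) {v v' : E n}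
    (hv : v ∈ vertices P) (hvi : B.repr v i < 0) (hvu : pairing v u = 0)
    (hv' : v' ∈ vertices P) (hv'i : B.repr v' i < 0) (hv'u : pairing v' u = 0) :
    v = v' := by
  classical
  haveI : Nonempty (Fin n) := ⟨⟨0, hn⟩⟩
  have huP : u ∈ dualPolytope P := hu.1
  have hSP : ∀ s ∈ S, -1 ≤ pairing s u := fun s hs =>
    huP s (hP ▸ subset_convexHull ℚ (S : Set (E n)) hs)
  have hVS : vertices P ⊆ (S : Set (E n)) := fun x hx =>
    extremePoints_convexHull_subset (hP ▸ hx)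
  set wv : E n := toVec (B.coord i) with hwv
  have hBj_vert : ∀ j, B j ∈ vertices (facetOf P u) := fun j => by
    rw [hBV]; exact ⟨j, rfl⟩
  have hBjF : ∀ j, B j ∈ facetOf P u := fun j => extremePoints_subset (hBj_vert j)
  have hBjP : ∀ j, B j ∈ P := fun j => (hBjF j).1
  have hBju : ∀ j, pairing (B j) u = -1 := fun j => (hBjF j).2
  have hBjvP : ∀ j, B j ∈ vertices P := fun j => vertices_facet_subset huP (hBj_vert j)
  have hnonneg := repr_nonneg_on_facet hP huP B hBV i
  set S' := S.filter (fun s => pairing s wv < 0) with hS'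
  have hvS : v ∈ S := hVS hv
  have hvS' : v ∈ S' := Finset.mem_filter.2 ⟨hvS, by rw [hwv, pairing_coordVec]; exact hvi⟩
  have hS'ne : S'.Nonempty := ⟨v, hvS'⟩
  set f : E n → ℚ := fun s => (pairing s u + 1) / (-(pairing s wv)) with hf
  set t := S'.inf' hS'ne f with ht
  have hfpos : ∀ s ∈ S', 0 < f s := by
    intro s hs
    obtain ⟨hsS, hsw⟩ := Finset.mem_filter.1 hs
    have h1 : -1 ≤ pairing s u := hSP s hsS
    have h2 : pairing s u ≠ -1 := by
      intro h
      have h3 : 0 ≤ B.repr s i :=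
        hnonneg s ⟨hP ▸ subset_convexHull ℚ (S : Set (E n)) hsS, h⟩
      have h4 : B.repr s i < 0 := by rwa [hwv, pairing_coordVec] at hsw
      linarith
    have h5 : 0 < pairing s u + 1 := by
      rcases lt_or_eq_of_le h1 with h' | h'
      · linarith
      · exact absurd h'.symm h2
    exact div_pos h5 (by linarith)
  have htpos : 0 < t := (Finset.lt_inf'_iff hS'ne).2 hfpos
  set u' := u + t • wv with hu'
  have hpair_u' : ∀ x : E n, pairing x u' = pairing x u + t * pairing x wv := by
    intro x; rw [hu', pairing_add_right, pairing_smul_right]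
  have hu'dual : u' ∈ dualPolytope P := by
    apply mem_dual_of_forall hP
    intro s hs
    rw [hpair_u']
    by_cases hsw : pairing s wv < 0
    · have hsS' : s ∈ S' := Finset.mem_filter.2 ⟨hs, hsw⟩
      have hts : t ≤ f s := Finset.inf'_le f hsS'
      have hkey : t * (-(pairing s wv)) ≤ pairing s u + 1 := by
        simp only [hf] at hts
        calc t * (-(pairing s wv))
            ≤ ((pairing s u + 1) / (-(pairing s wv))) * (-(pairing s wv)) :=
              mul_le_mul_of_nonneg_right hts (by linarith)
          _ = pairing s u + 1 := div_mul_cancel₀ _ (by linarith)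
      linarith
    · push_neg at hsw
      have := hSP s hs
      nlinarith
  obtain ⟨sstar, hsstar, htf⟩ := Finset.exists_mem_eq_inf' hS'ne f
  obtain ⟨hssS, hssw⟩ := Finset.mem_filter.1 hsstar
  have hssne : pairing sstar wv ≠ 0 := ne_of_lt hssw
  have hsstight : pairing sstar u' = -1 := by
    rw [hpair_u', show t = f sstar from ht.trans htf]
    simp only [hf]
    rw [div_neg, neg_mul, div_mul_cancel₀ _ hssne]
    ring
  set g : Fin n → E n := fun k => if k = i then sstar else B k with hg
  have hgP : ∀ k, g k ∈ P := by
    intro k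
    by_cases hk : k = i
    · simp only [hg, hk, if_pos]
      exact hP ▸ subset_convexHull ℚ (S : Set (E n)) hssS
    · simp only [hg, hk, if_neg, if_false]
      exact hBjP k
  have hBkw : ∀ k, k ≠ i → pairing (B k) wv = 0 := by
    intro k hk
    rw [hwv, pairing_coordVec, B.repr_self, Finsupp.single_apply]
    simp [hk]
  have hgt : ∀ k, pairing (g k) u' = -1 := by
    intro k
    by_cases hk : k = i
    · simp only [hg, hk, if_pos]
      exact hsstight
    · simp only [hg, hk, if_neg, if_false]
      rw [hpair_u', hBju k, hBkw k hk, mul_zero, add_zero]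
  have hsrepr : B.repr sstar i ≠ 0 := by
    have : B.repr sstar i < 0 := by rwa [hwv, pairing_coordVec] at hssw
    exact ne_of_lt this
  have hli : LinearIndependent ℚ g := replace_family_linIndep B i hsrepr
  have hspan : Submodule.span ℚ (Set.range g) = ⊤ :=
    hli.span_eq_top_of_card_eq_finrank (by simp [finrank_En])
  have hu'vert : u' ∈ vertices (dualPolytope P) := dual_vertex_of_tight hu'dual g hgP hgt hspan
  have hu'lat : IsLatticePt u' := by
    apply hTlat
    rw [← Finset.mem_coe]
    exact extremePoints_convexHull_subset (hT ▸ hu'vert)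
  have hmemF' : ∀ z : E n, z ∈ vertices P → pairing z u = 0 → B.repr z i < 0 →
      z ∈ facetOf P u' := by
    intro z hz hzu hzi
    have hzP : z ∈ P := extremePoints_subset hz
    have hzlat : IsLatticePt z := hSlat z (hVS hz)
    obtain ⟨m, hm⟩ := pairing_int hzlat hu'lat
    have hge : -1 ≤ pairing z u' := hu'dual z hzP
    have hlt0 : pairing z u' < 0 := by
      rw [hpair_u', hzu, zero_add]
      exact mul_neg_of_pos_of_neg htpos (by rwa [hwv, pairing_coordVec])
    have hm1 : m = -1 := by
      have h1 : (-1 : ℚ) ≤ (m : ℚ) := hm ▸ hge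
      have h2 : (m : ℚ) < 0 := hm ▸ hlt0
      have h1' : (-1 : ℤ) ≤ m := by exact_mod_cast h1
      have h2' : m < 0 := by exact_mod_cast h2
      omega
    refine ⟨hzP, ?_⟩
    rw [hm, hm1]
    norm_num
  have hvF' : v ∈ facetOf P u' := hmemF' v hv hvu hvi
  have hv'F' : v' ∈ facetOf P u' := hmemF' v' hv' hv'u hv'i
  have hfacet' : IsFacet P (facetOf P u') := isFacet_facetOf hn hP h0 hu'vert
  obtain ⟨e', hVe', hli'⟩ := hsimp _ hfacet'
  have hvv : v ∈ vertices (facetOf P u') := mem_vertices_of_mem (fun x hx => hx.1) hv hvF'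
  have hv'v : v' ∈ vertices (facetOf P u') := mem_vertices_of_mem (fun x hx => hx.1) hv' hv'F'
  have hBkF' : ∀ k, k ≠ i → B k ∈ vertices (facetOf P u') := by
    intro k hk
    apply mem_vertices_of_mem (fun x hx => hx.1) (hBjvP k)
    refine ⟨hBjP k, ?_⟩
    rw [hpair_u', hBju k, hBkw k hk, mul_zero, add_zero]
  have hDR : (⇑B) '' ({i}ᶜ : Set (Fin n)) ⊆ Set.range e' := by
    rintro z ⟨k, hk, rfl⟩
    rw [← hVe']
    exact hBkF' k hk
  have hvR : v ∈ Set.range e' := by rw [← hVe']; exact hvv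
  have hv'R : v' ∈ Set.range e' := by rw [← hVe']; exact hv'v
  have hnotD : ∀ z : E n, B.repr z i < 0 → z ∉ (⇑B) '' ({i}ᶜ : Set (Fin n)) := by
    intro z hzi hzD
    obtain ⟨k, hk, hkz⟩ := hzD
    have hzero : B.repr (B k) i = 0 := by
      rw [B.repr_self, Finsupp.single_apply, if_neg (by simpa using hk)]
    rw [hkz] at hzero
    linarith
  have hRfin : (Set.range e').Finite := Set.finite_range e'
  have hDfin : ((⇑B) '' ({i}ᶜ : Set (Fin n))).Finite := Set.Finite.image _ (Set.toFinite _)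
  have hcardR : (Set.range e').ncard = n := by
    rw [← Set.image_univ, Set.ncard_image_of_injective _ hli'.injective, Set.ncard_univ]
    simp
  have hcardD : ((⇑B) '' ({i}ᶜ : Set (Fin n))).ncard = n - 1 := by
    rw [Set.ncard_image_of_injective _ B.injective, Set.compl_eq_univ_diff,
      Set.ncard_diff (Set.subset_univ _), Set.ncard_univ, Set.ncard_singleton]
    simp
  have hcard1 : ((Set.range e') \ ((⇑B) '' ({i}ᶜ : Set (Fin n)))).ncard = 1 := by
    rw [Set.ncard_diff hDR hDfin, hcardR, hcardD]
    omega
  obtain ⟨a, ha⟩ := Set.ncard_eq_one.1 hcard1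
  have h1 : v ∈ (Set.range e') \ ((⇑B) '' ({i}ᶜ : Set (Fin n))) := ⟨hvR, hnotD v hvi⟩
  have h2 : v' ∈ (Set.range e') \ ((⇑B) '' ({i}ᶜ : Set (Fin n))) := ⟨hv'R, hnotD v' hv'i⟩
  rw [ha] at h1 h2
  rw [h1, h2]

/-- For a simplicial reflexive polytope `P` of dimension `n` and any
`u ∈ V(P*)`: the number of vertices `v` with `⟨v,u⟩ = 0` is at most `n`, and the number of
vertices with `⟨v,u⟩ = -1` is exactly `n`. -/
theorem card_vertices_on_levels {n : ℕ} (hn : 1 ≤ n) (P : Set (E n))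
    (hrefl : IsReflexivePolytope P) (hsimp : IsSimplicial P)
    (u : E n) (hu : u ∈ vertices (dualPolytope P)) :
    {v ∈ vertices P | pairing v u = 0}.ncard ≤ n ∧
    {v ∈ vertices P | pairing v u = -1}.ncard = n := by
  classical
  obtain ⟨⟨S, hSlat, hP⟩, h0, ⟨T, hTlat, hT⟩⟩ := hrefl
  haveI : Nonempty (Fin n) := ⟨⟨0, hn⟩⟩
  have huP : u ∈ dualPolytope P := hu.1
  have hfacet : IsFacet P (facetOf P u) := isFacet_facetOf hn hP h0 hu
  obtain ⟨e, hVe, hli⟩ := hsimp _ hfacet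
  have hcard : Fintype.card (Fin n) = Module.finrank ℚ (E n) := by simp [finrank_En]
  set B : Module.Basis (Fin n) ℚ (E n) := basisOfLinearIndependentOfCardEqFinrank hli hcard with hBdef
  have hBe : ⇑B = e := coe_basisOfLinearIndependentOfCardEqFinrank hli hcard
  have hBV : vertices (facetOf P u) = Set.range (⇑B) := by rw [hBe, hVe]
  have hset2 : {v ∈ vertices P | pairing v u = -1} = vertices (facetOf P u) := by
    ext x
    constructor
    · rintro ⟨hxv, hxu⟩
      exact mem_vertices_of_mem (fun y hy => hy.1) hxv ⟨extremePoints_subset hxv, hxu⟩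
    · intro hx
      exact ⟨vertices_facet_subset huP hx, (extremePoints_subset hx).2⟩
  have h2 : {v ∈ vertices P | pairing v u = -1}.ncard = n := by
    rw [hset2, hBV, ← Set.image_univ, Set.ncard_image_of_injective _ B.injective,
      Set.ncard_univ]
    simp
  refine ⟨?_, h2⟩
  have hBju : ∀ j, pairing (B j) u = -1 := by
    intro j
    have hj : B j ∈ vertices (facetOf P u) := by rw [hBV]; exact ⟨j, rfl⟩
    exact (extremePoints_subset hj).2
  have hexneg : ∀ v, v ∈ vertices P → pairing v u = 0 → ∃ i, B.repr v i < 0 := by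
    intro v hv hvu
    have hvne : v ≠ 0 := vertex_ne_zero hn h0 hv
    have hsum : ∑ j, B.repr v j = 0 := by
      have hp := pairing_eq_neg_sum_repr B hBju v
      rw [hvu] at hp
      linarith
    by_contra hno
    push_neg at hno
    have hall : ∀ j ∈ Finset.univ, B.repr v j = 0 :=
      (Finset.sum_eq_zero_iff_of_nonneg (fun j _ => hno j)).1 hsum
    apply hvne
    have hv0 : v = ∑ j, B.repr v j • B j := (B.sum_repr v).symm
    rw [hv0]
    exact Finset.sum_eq_zero fun j hj => by rw [hall j hj, zero_smul]
  set ff : E n → Fin n :=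
    fun v => if h : ∃ i, B.repr v i < 0 then h.choose else ⟨0, hn⟩ with hff
  have hmaps : ∀ v ∈ {v ∈ vertices P | pairing v u = 0}, ff v ∈ (Set.univ : Set (Fin n)) :=
    fun v _ => Set.mem_univ _
  have hspec : ∀ v, v ∈ vertices P → pairing v u = 0 → B.repr v (ff v) < 0 := by
    intro v hv hvu
    have h1 : ∃ i, B.repr v i < 0 := hexneg v hv hvu
    have e1 : ff v = h1.choose := by simp only [hff]; rw [dif_pos h1]
    rw [e1]
    exact h1.choose_spec
  have hinj : Set.InjOn ff {v ∈ vertices P | pairing v u = 0} := by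
    rintro v ⟨hv, hvu⟩ v' ⟨hv', hv'u⟩ heq
    have hspec1 : B.repr v (ff v) < 0 := hspec v hv hvu
    have hspec2 : B.repr v' (ff v) < 0 := by rw [heq]; exact hspec v' hv' hv'u
    exact key_unique hn hSlat hP hTlat hT h0 hsimp hu B hBV (ff v)
      hv hspec1 hvu hv' hspec2 hv'u
  have hle := Set.ncard_le_ncard_of_injOn ff hmaps hinj Set.finite_univ
  rwa [Set.ncard_univ, Nat.card_eq_fintype_card, Fintype.card_fin] at hle

end Fano
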